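/- Let h̄ > 0, 0 < λ₂ ≤ λ_N, 0 < μ₁ < μ₂, and suppose k₁, k₂ satisfy: 2(μ₂−μ₁)/(h̄λ_N(μ₁+μ₂+h̄)) > k₁ > 0; min{2/(h̄λ_N), 4/(λ_N(2μ₁+h̄))} > k₂ > 4/(λ₂(μ₁+μ₂)); 4/(λ_N(μ₁+μ₂+h̄)) > k₂ − k₁ > 0. Then for all h ∈ (0, h̄) and λ ∈ [λ₂, λ_N], the matrix Ŝ(h,λ) = [[1 − hλγk₁/2, 2h/(μ₂−μ₁) − hλγk₂/2], [−hλk₁/2, 1 − hλk₂/2]], with γ = (μ₁+μ₂+h)/(μ₂−μ₁), satisfies max{|s₁₁|+|s₁₂|, |s₁₁|+|s₂₁|, |s₂₂|+|s₁₂|, |s₂₂|+|s₂₁|} < 1, and hence σ̄(Ŝ(h,λ)) < 1. -/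

import Mathlib

/-!
Schur test: by Cauchy–Schwarz on each row of `A x`, `σ̄(A)` is at most any common bound `M` of
the absolute row and column sums of `A`.

With `c = h / (2 (μ₂ - μ₁))` and `σ = μ₁ + μ₂ + h` one has `Ŝ = I - c P`, where
`P = [[λσk₁, λσk₂ - 4], [λ(μ₂ - μ₁)k₁, λ(μ₂ - μ₁)k₂]]`. By monotonicity in `h` and `λ`, the design
inequalities give `c p₁₁ ≤ 1`, `c p₂₂ ≤ 1` and that both off-diagonal entries of `P` are smaller in
absolute value than both diagonal ones, which makes every absolute row and column sum of `Ŝ`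
less than `1`.
-/

/-- The largest singular value of a square real matrix. -/
noncomputable def sigmaMax {m : Type*} [Fintype m] [DecidableEq m]
    (A : Matrix m m ℝ) : ℝ :=
  ‖Matrix.toEuclideanCLM (𝕜 := ℝ) A‖

open Matrix WithLp in
theorem Matrix.norm_toEuclideanCLM_le_of_sum_norm_le {𝕜 n : Type*} [RCLike 𝕜] [Fintype n]
    [DecidableEq n] (A : Matrix n n 𝕜) {M : ℝ} (hM : 0 ≤ M) (hrow : ∀ i, ∑ j, ‖A i j‖ ≤ M)
    (hcol : ∀ j, ∑ i, ‖A i j‖ ≤ M) : ‖toEuclideanCLM (𝕜 := 𝕜) A‖ ≤ M := by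
  refine ContinuousLinearMap.opNorm_le_bound _ hM fun x => ?_
  refine le_of_pow_le_pow_left₀ two_ne_zero (by positivity) ?_
  have hrow_sq (i : n) : ‖(A *ᵥ ofLp x) i‖ ^ 2 ≤ M * ∑ j, ‖A i j‖ * ‖x j‖ ^ 2 := calc
    ‖(A *ᵥ ofLp x) i‖ ^ 2 ≤ (∑ j, ‖A i j‖ * ‖x j‖) ^ 2 := by
        gcongr; exact (norm_sum_le _ _).trans_eq (by simp [norm_mul])
    _ ≤ (∑ j, ‖A i j‖) * ∑ j, ‖A i j‖ * ‖x j‖ ^ 2 :=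
        Finset.sum_sq_le_sum_mul_sum_of_sq_le_mul _ (fun _ _ => norm_nonneg _)
          (fun _ _ => by positivity) fun _ _ => le_of_eq (by ring)
    _ ≤ M * ∑ j, ‖A i j‖ * ‖x j‖ ^ 2 := by gcongr; exact hrow i
  calc ‖toEuclideanCLM (𝕜 := 𝕜) A x‖ ^ 2 = ∑ i, ‖(A *ᵥ ofLp x) i‖ ^ 2 :=
        EuclideanSpace.norm_sq_eq _
    _ ≤ ∑ i, M * ∑ j, ‖A i j‖ * ‖x j‖ ^ 2 := Finset.sum_le_sum fun i _ => hrow_sq i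
    _ = M * ∑ j, (∑ i, ‖A i j‖) * ‖x j‖ ^ 2 := by
        simp only [← Finset.mul_sum, Finset.sum_mul]; rw [Finset.sum_comm]
    _ ≤ M * ∑ j, M * ‖x j‖ ^ 2 := by gcongr with j; exact hcol j
    _ = (M * ‖x‖) ^ 2 := by rw [mul_pow, EuclideanSpace.norm_sq_eq, ← Finset.mul_sum]; ring

theorem sigmaMax_fin_two_le (a b c d : ℝ) :
    sigmaMax !![a, b; c, d] ≤ max (max (|a| + |b|) (|a| + |c|)) (max (|d| + |b|) (|d| + |c|)) := by
  refine Matrix.norm_toEuclideanCLM_le_of_sum_norm_le _ (by positivity) (fun i => ?_) (fun j => ?_)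
  · fin_cases i <;> simp [Fin.sum_univ_two, add_comm]
  · fin_cases j <;> simp [Fin.sum_univ_two, add_comm]

theorem max_abs_sums_one_sub_mul_lt_one {c p₁₁ p₂₂ q₁₂ q₂₁ : ℝ} (hc : 0 < c)
    (h₁₁ : c * p₁₁ ≤ 1) (h₂₂ : c * p₂₂ ≤ 1) (h₁₂₁ : |q₁₂| < p₁₁) (h₁₂₂ : |q₁₂| < p₂₂)
    (h₂₁₁ : |q₂₁| < p₁₁) (h₂₁₂ : |q₂₁| < p₂₂) :
    max (max (|1 - c * p₁₁| + |c * q₁₂|) (|1 - c * p₁₁| + |c * q₂₁|))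
      (max (|1 - c * p₂₂| + |c * q₁₂|) (|1 - c * p₂₂| + |c * q₂₁|)) < 1 := by
  have hp₁₁ : 0 ≤ c * p₁₁ := mul_nonneg hc.le ((abs_nonneg _).trans h₁₂₁.le)
  have hp₂₂ : 0 ≤ c * p₂₂ := mul_nonneg hc.le ((abs_nonneg _).trans h₁₂₂.le)
  rw [abs_of_nonneg (sub_nonneg.2 h₁₁), abs_of_nonneg (sub_nonneg.2 h₂₂), abs_mul, abs_mul,
    abs_of_pos hc]
  have := mul_lt_mul_of_pos_left h₁₂₁ hc
  have := mul_lt_mul_of_pos_left h₁₂₂ hc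
  have := mul_lt_mul_of_pos_left h₂₁₁ hc
  have := mul_lt_mul_of_pos_left h₂₁₂ hc
  refine max_lt (max_lt ?_ ?_) (max_lt ?_ ?_) <;> linarith

theorem shat_max_abs_sums_lt_one {h lam mu1 mu2 k₁ k₂ : ℝ} (hh : 0 < h) (hlam : 0 < lam)
    (hm1 : 0 < mu1) (hm : mu1 < mu2) (hk₁ : 0 < k₁) (hk : k₁ < k₂)
    (hk₁σ : h * lam * (mu1 + mu2 + h) * k₁ ≤ 2 * (mu2 - mu1)) (hk₂h : h * lam * k₂ ≤ 2)
    (hk₂μ : lam * (2 * mu1 + h) * k₂ < 4) (hkσ : lam * (mu1 + mu2 + h) * (k₂ - k₁) < 4)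
    (hk₂σ : 4 < lam * (mu1 + mu2 + h) * k₂) :
    let γ := (mu1 + mu2 + h) / (mu2 - mu1)
    let s11 := 1 - h * lam * γ * k₁ / 2
    let s12 := 2 * h / (mu2 - mu1) - h * lam * γ * k₂ / 2
    let s21 := -(h * lam * k₁ / 2)
    let s22 := 1 - h * lam * k₂ / 2
    max (max (|s11| + |s12|) (|s11| + |s21|)) (max (|s22| + |s12|) (|s22| + |s21|)) < 1 := by
  intro γ s11 s12 s21 s22
  have hμ : 0 < mu2 - mu1 := sub_pos.2 hm
  set c := h / (2 * (mu2 - mu1)) with hc_def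
  have e11 : s11 = 1 - c * (lam * (mu1 + mu2 + h) * k₁) := by simp only [s11, γ, c]; field_simp
  have e12 : s12 = c * (4 - lam * (mu1 + mu2 + h) * k₂) := by
    simp only [s12, γ, c]; field_simp; ring
  have e21 : s21 = c * -(lam * (mu2 - mu1) * k₁) := by simp only [s21, c]; field_simp
  have e22 : s22 = 1 - c * (lam * (mu2 - mu1) * k₂) := by simp only [s22, c]; field_simp
  have hdk₁ : 0 < lam * (mu2 - mu1) * k₁ := by positivity
  have hdk : 0 < lam * (mu2 - mu1) * (k₂ - k₁) := by have := sub_pos.2 hk; positivity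
  have hμk₁ : 0 < lam * (2 * mu1 + h) * k₁ := by positivity
  rw [e11, e12, e21, e22]
  refine max_abs_sums_one_sub_mul_lt_one (by positivity) ?_ ?_ (abs_lt.2 ⟨?_, ?_⟩)
    (abs_lt.2 ⟨?_, ?_⟩) ?_ ?_
  · rw [hc_def, div_mul_eq_mul_div, div_le_one (by positivity)]; linarith
  · calc c * (lam * (mu2 - mu1) * k₂) = h * lam * k₂ / 2 := by rw [hc_def]; field_simp
      _ ≤ 1 := by linarith
  all_goals first | linarith | rw [abs_neg, abs_of_pos hdk₁]; linarith

theorem stmt15_general (hbar lam2 lamN mu1 mu2 k₁ k₂ : ℝ)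
    (hh : 0 < hbar) (hl2 : 0 < lam2)
    (hm1 : 0 < mu1) (hm : mu1 < mu2)
    (hk1u : 2 * (mu2 - mu1) / (hbar * lamN * (mu1 + mu2 + hbar)) > k₁)
    (hk1l : k₁ > 0)
    (hk2u : min (2 / (hbar * lamN)) (4 / (lamN * (2 * mu1 + hbar))) > k₂)
    (hk2l : k₂ > 4 / (lam2 * (mu1 + mu2)))
    (hdu : 4 / (lamN * (mu1 + mu2 + hbar)) > k₂ - k₁)
    (hdl : k₂ - k₁ > 0) :
    ∀ h ∈ Set.Ioo (0 : ℝ) hbar, ∀ lam ∈ Set.Icc lam2 lamN,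
      let γ := (mu1 + mu2 + h) / (mu2 - mu1)
      let s11 := 1 - h * lam * γ * k₁ / 2
      let s12 := 2 * h / (mu2 - mu1) - h * lam * γ * k₂ / 2
      let s21 := -(h * lam * k₁ / 2)
      let s22 := 1 - h * lam * k₂ / 2
      max (max (|s11| + |s12|) (|s11| + |s21|)) (max (|s22| + |s12|) (|s22| + |s21|)) < 1 ∧
      sigmaMax !![s11, s12; s21, s22] < 1 := by
  rintro h ⟨hh0, hhbar⟩ lam ⟨hlam2, hlamN⟩
  have hlam : 0 < lam := hl2.trans_le hlam2
  have hlamN0 : 0 < lamN := hlam.trans_le hlamN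
  have hmu2 : 0 < mu2 := hm1.trans hm
  have hk₂ : 0 < k₂ := by linarith
  obtain ⟨hk2h, hk2m⟩ := lt_min_iff.1 hk2u
  have hsums := shat_max_abs_sums_lt_one hh0 hlam hm1 hm hk1l (sub_pos.1 hdl)
    (calc h * lam * (mu1 + mu2 + h) * k₁ ≤ hbar * lamN * (mu1 + mu2 + hbar) * k₁ := by gcongr
      _ ≤ 2 * (mu2 - mu1) := by have := (lt_div_iff₀ (by positivity)).1 hk1u; linarith)
    (calc h * lam * k₂ ≤ hbar * lamN * k₂ := by gcongr
      _ ≤ 2 := by have := (lt_div_iff₀ (by positivity)).1 hk2h; linarith)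
    (calc lam * (2 * mu1 + h) * k₂ ≤ lamN * (2 * mu1 + hbar) * k₂ := by gcongr
      _ < 4 := by have := (lt_div_iff₀ (by positivity)).1 hk2m; linarith)
    (calc lam * (mu1 + mu2 + h) * (k₂ - k₁) ≤ lamN * (mu1 + mu2 + hbar) * (k₂ - k₁) := by gcongr
      _ < 4 := by have := (lt_div_iff₀ (by positivity)).1 hdu; linarith)
    (calc 4 < k₂ * (lam2 * (mu1 + mu2)) := (div_lt_iff₀ (by positivity)).1 hk2l
      _ ≤ lam * (mu1 + mu2 + h) * k₂ := by rw [mul_comm]; gcongr ?_ * ?_ * _; linarith)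
  intro γ s11 s12 s21 s22
  exact ⟨hsums, (sigmaMax_fin_two_le _ _ _ _).trans_lt hsums⟩

/-- If `(k₁, k₂)` satisfy the design inequalities, then for all `h ∈ (0, h̄)`
and `λ ∈ [λ₂, λ_N]`, the transformed matrix `Ŝ(h,λ)` satisfies the
Gershgorin-type bound `max{|s₁₁|+|s₁₂|, |s₁₁|+|s₂₁|, |s₂₂|+|s₁₂|, |s₂₂|+|s₂₁|} < 1`,
and hence `σ̄(Ŝ(h,λ)) < 1`. -/
theorem stmt15 (hbar lam2 lamN mu1 mu2 k₁ k₂ : ℝ)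
    (hh : 0 < hbar) (hl2 : 0 < lam2) (hlN : lam2 ≤ lamN)
    (hm1 : 0 < mu1) (hm : mu1 < mu2)
    (hk1u : 2 * (mu2 - mu1) / (hbar * lamN * (mu1 + mu2 + hbar)) > k₁)
    (hk1l : k₁ > 0)
    (hk2u : min (2 / (hbar * lamN)) (4 / (lamN * (2 * mu1 + hbar))) > k₂)
    (hk2l : k₂ > 4 / (lam2 * (mu1 + mu2)))
    (hdu : 4 / (lamN * (mu1 + mu2 + hbar)) > k₂ - k₁)
    (hdl : k₂ - k₁ > 0) :
    ∀ h ∈ Set.Ioo (0 : ℝ) hbar, ∀ lam ∈ Set.Icc lam2 lamN,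
      let γ := (mu1 + mu2 + h) / (mu2 - mu1)
      let s11 := 1 - h * lam * γ * k₁ / 2
      let s12 := 2 * h / (mu2 - mu1) - h * lam * γ * k₂ / 2
      let s21 := -(h * lam * k₁ / 2)
      let s22 := 1 - h * lam * k₂ / 2
      max (max (|s11| + |s12|) (|s11| + |s21|)) (max (|s22| + |s12|) (|s22| + |s21|)) < 1 ∧
      sigmaMax !![s11, s12; s21, s22] < 1 :=
  stmt15_general hbar lam2 lamN mu1 mu2 k₁ k₂ hh hl2 hm1 hm hk1u hk1l hk2u hk2l hdu hdl
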